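/- The Leibniz algebra λ₅ on ℂ^3 defined on the basis {x₁, x₂, x₃} by λ₅(x₂,x₂) = λ₅(x₃,x₂) = λ₅(x₂,x₃) = x₁ (other basis products zero) is isomorphic to the algebra μ₃ defined on {e₁, e₂, e₃} by μ₃(e₁,e₁) = e₂ and μ₃(e₃,e₃) = e₂ (other basis products zero), via the change of basis e₁ = x₂, e₂ = x₁, e₃ = -i·x₂ + i·x₃. -/
import Mathlib


/-- `λ₅` on the basis `{x₁,x₂,x₃}` (standard basis of `ℂ³`):
`λ₅(x₂,x₂) = λ₅(x₃,x₂) = λ₅(x₂,x₃) = x₁`, other basis products zero. -/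
def lam5 (u v : Fin 3 → ℂ) : Fin 3 → ℂ :=
  (u 1 * v 1 + u 2 * v 1 + u 1 * v 2) • (Pi.single 0 1 : Fin 3 → ℂ)

/-- `μ₃` on the basis `{e₁,e₂,e₃}` (standard basis of `ℂ³`):
`μ₃(e₁,e₁) = e₂`, `μ₃(e₃,e₃) = e₂`, other basis products zero. -/
def mu3 (u v : Fin 3 → ℂ) : Fin 3 → ℂ :=
  (u 0 * v 0 + u 2 * v 2) • (Pi.single 1 1 : Fin 3 → ℂ)

/-- The change of basis `e₁ = x₂`, `e₂ = x₁`, `e₃ = -i·x₂ + i·x₃`. -/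
def chg (v : Fin 3 → ℂ) : Fin 3 → ℂ :=
  v 0 • (Pi.single 1 1 : Fin 3 → ℂ) + v 1 • (Pi.single 0 1 : Fin 3 → ℂ) +
    v 2 • ((-Complex.I) • (Pi.single 1 1 : Fin 3 → ℂ) +
      Complex.I • (Pi.single 2 1 : Fin 3 → ℂ))

def chginv (w : Fin 3 → ℂ) : Fin 3 → ℂ :=
  ![w 1 + w 2, w 0, -Complex.I * w 2]

/-- `λ₅` is isomorphic to `μ₃` via the change of basis `e₁ = x₂`, `e₂ = x₁`,
`e₃ = -i·x₂ + i·x₃`. -/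
theorem stmt_10 :
    IsLinearMap ℂ chg ∧ Function.Bijective chg ∧ ∀ u v, chg (mu3 u v) = lam5 (chg u) (chg v) := by
  refine ⟨⟨?_, ?_⟩, ?_, ?_⟩
  · intro x y
    funext i
    fin_cases i <;> simp [chg, Pi.single] <;> ring
  · intro c x
    funext i
    fin_cases i <;> simp [chg, Pi.single] <;> ring
  · refine Function.bijective_iff_has_inverse.mpr ⟨chginv, ?_, ?_⟩
    · intro v
      funext i
      fin_cases i <;> simp [chg, chginv, Pi.single] <;> ring_nf <;>
        simp [Complex.I_sq] <;> ring
    · intro v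
      funext i
      fin_cases i <;> simp [chg, chginv, Pi.single] <;> ring_nf <;>
        simp [Complex.I_sq] <;> ring
  · intro u v
    funext i
    fin_cases i <;> simp [chg, mu3, lam5, Pi.single] <;> ring_nf <;>
      simp [Complex.I_sq] <;> ring
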